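/- arXiv:2604.03433 — 7 statements merged into one kernel-verified Lean document; each statement's English description precedes it below -/
import Mathlib

section
/- Every minor minimal non-apex graph has minimum vertex degree at least 3. -/
open SimpleGraph

/-- `H` is a minor of `G`: there is an assignment of (some) vertices of `G` to
branch sets, one nonempty connected branch set for each vertex of `H`, such that
every edge of `H` is realized by an edge of `G` between the corresponding branch sets. -/
def IsMinor {V W : Type} (H : SimpleGraph W) (G : SimpleGraph V) : Prop :=
  ∃ f : V → Option W,
    (∀ w : W, ∃ v, f v = some w) ∧
    (∀ w : W, (G.induce {v | f v = some w}).Connected) ∧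
    (∀ w₁ w₂ : W, H.Adj w₁ w₂ →
      ∃ v₁ v₂, f v₁ = some w₁ ∧ f v₂ = some w₂ ∧ G.Adj v₁ v₂)

/-- Planarity via Wagner's theorem: no `K₅` minor and no `K₃,₃` minor. -/
def IsPlanar {V : Type} (G : SimpleGraph V) : Prop :=
  ¬ IsMinor (completeGraph (Fin 5)) G ∧
    ¬ IsMinor (completeBipartiteGraph (Fin 3) (Fin 3)) G

/-- A graph is apex if deleting some vertex leaves a planar graph. -/
def IsApex {V : Type} (G : SimpleGraph V) : Prop :=
  ∃ v : V, IsPlanar (G.induce {u | u ≠ v})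

/-- Minor minimal non-apex: not apex, but every proper minor is apex. -/
def IsMMNA {V : Type} (G : SimpleGraph V) : Prop :=
  ¬ IsApex G ∧
    ∀ (W : Type) (H : SimpleGraph W), IsMinor H G → ¬ IsMinor G H → IsApex H

/-- The degree of a vertex, as the cardinality of its neighbor set. -/
noncomputable def vdeg {V : Type} (G : SimpleGraph V) (v : V) : ℕ :=
  (G.neighborSet v).ncard

/-- Edge list of the icosahedral graph on 12 vertices. -/
def icList : List (Fin 12 × Fin 12) :=
  [(0,1),(0,2),(0,3),(0,4),(0,5),
   (1,2),(2,3),(3,4),(4,5),(5,1),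
   (11,6),(11,7),(11,8),(11,9),(11,10),
   (6,7),(7,8),(8,9),(9,10),(10,6),
   (1,6),(1,7),(2,7),(2,8),(3,8),(3,9),(4,9),(4,10),(5,10),(5,6)]

/-- The icosahedral graph `Ic`. -/
def Ic : SimpleGraph (Fin 12) := SimpleGraph.fromRel (fun a b => (a, b) ∈ icList)

/-- The join `K₁ ∗ Ic`: a cone over the icosahedral graph. -/
def ConeIc : SimpleGraph (Unit ⊕ Fin 12) :=
  SimpleGraph.fromRel (fun a b =>
    a = Sum.inl () ∨ b = Sum.inl () ∨ ∃ x y, a = Sum.inr x ∧ b = Sum.inr y ∧ Ic.Adj x y)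

/-!
Let `v` have at most two neighbours, and merge `v` into one of them, `u` (if `v` is isolated,
just delete it). The result is a proper minor of `G`, hence apex: deleting some `a` makes it
planar. Every vertex of `K₅` and `K₃,₃` has degree at least `3`, so in a model of one of them in
`G - a` the vertex `v` is never a whole branch set, and removing `v` from its branch set keeps the
model intact in the merged graph: the paths and edges through `v` are rerouted through its at
most two neighbours, which are adjacent after merging. So `G - a` is planar too and `G` is apex.
-/

variable {V W κ : Type}

lemma exists_neighborSet_subset_pair {G : SimpleGraph V} {v : V} (hfin : (G.neighborSet v).Finite)
    (hv : vdeg G v ≤ 2) :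
    ∃ u w, G.neighborSet v ⊆ {u, w} ∧ ∀ y, G.Adj v y → G.Adj v u := by
  unfold vdeg at hv
  interval_cases hn : (G.neighborSet v).ncard
  · rw [Set.ncard_eq_zero hfin] at hn
    exact ⟨v, v, by simp [hn], fun y hy => (hn ▸ hy : y ∈ (∅ : Set V)).elim⟩
  · obtain ⟨y, hy⟩ := Set.ncard_eq_one.mp hn
    exact ⟨y, y, by simp [hy], fun _ _ => show y ∈ G.neighborSet v by simp [hy]⟩
  · obtain ⟨x, y, -, hxy⟩ := Set.ncard_eq_two.mp hn
    exact ⟨x, y, hxy.le, fun _ _ => show x ∈ G.neighborSet v by simp [hxy]⟩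

structure IsMinorModel (K : SimpleGraph κ) (G : SimpleGraph V) (f : V → Option κ) : Prop where
  exists_eq_some : ∀ k, ∃ x, f x = some k
  connected : ∀ k, (G.induce {x | f x = some k}).Connected
  exists_adj : ∀ k₁ k₂, K.Adj k₁ k₂ → ∃ x₁ x₂, f x₁ = some k₁ ∧ f x₂ = some k₂ ∧ G.Adj x₁ x₂

lemma isMinor_iff_exists_isMinorModel {K : SimpleGraph κ} {G : SimpleGraph V} :
    IsMinor K G ↔ ∃ f, IsMinorModel K G f :=
  ⟨fun ⟨f, h₁, h₂, h₃⟩ => ⟨f, h₁, h₂, h₃⟩, fun ⟨f, h₁, h₂, h₃⟩ => ⟨f, h₁, h₂, h₃⟩⟩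

lemma IsMinor.card_le [Fintype V] [Fintype W] {H : SimpleGraph W} {G : SimpleGraph V}
    (h : IsMinor H G) : Fintype.card W ≤ Fintype.card V := by
  obtain ⟨f, hf, -, -⟩ := h
  choose g hg using hf
  exact Fintype.card_le_of_injective g fun a b hab =>
    Option.some_injective _ ((hg a).symm.trans (hab ▸ hg b))

lemma SimpleGraph.Connected.of_surjective_of_reachable {G : SimpleGraph V} {H : SimpleGraph W}
    (hG : G.Connected) (φ : V → W) (hφ : Function.Surjective φ)
    (h : ∀ x y, G.Adj x y → H.Reachable (φ x) (φ y)) : H.Connected := by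
  have := hG.nonempty.map φ
  refine ⟨hφ.forall₂.2 fun x y => ?_⟩
  simp only [reachable_iff_reflTransGen] at h ⊢
  exact ((reachable_iff_reflTransGen x y).mp (hG.preconnected x y)).lift' φ h

lemma isMinor_induce_iff {K : SimpleGraph κ} {G : SimpleGraph V} (s : Set V) :
    IsMinor K (G.induce s) ↔ ∃ f, IsMinorModel K G f ∧ ∀ x ∉ s, f x = none := by
  classical
  rw [isMinor_iff_exists_isMinorModel]
  constructor
  · rintro ⟨g, hg⟩
    set f : V → Option κ := fun x => if hx : x ∈ s then g ⟨x, hx⟩ else none with hf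
    have hfg (x : s) : f x = g x := dif_pos x.2
    have hmem {x k} (hx : f x = some k) : x ∈ s := by
      by_contra hxs
      simp [hf, hxs] at hx
    refine ⟨f, ⟨fun k => ?_, fun k => ?_, fun k₁ k₂ hk => ?_⟩, fun x hx => dif_neg hx⟩
    · obtain ⟨x, hx⟩ := hg.exists_eq_some k
      exact ⟨x, (hfg x).trans hx⟩
    · refine (hg.connected k).map ⟨fun x => ⟨x.1, (hfg x.1).trans x.2⟩, fun h => h⟩ ?_
      rintro ⟨x, hx⟩
      exact ⟨⟨⟨x, hmem hx⟩, (hfg ⟨x, hmem hx⟩).symm.trans hx⟩, rfl⟩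
    · obtain ⟨x₁, x₂, h₁, h₂, hadj⟩ := hg.exists_adj k₁ k₂ hk
      exact ⟨x₁, x₂, (hfg x₁).trans h₁, (hfg x₂).trans h₂, hadj⟩
  · rintro ⟨f, hf, hfs⟩
    have hmem {x k} (hx : f x = some k) : x ∈ s := by
      by_contra hxs
      simp [hfs x hxs] at hx
    refine ⟨fun x => f x, ⟨fun k => ?_, fun k => ?_, fun k₁ k₂ hk => ?_⟩⟩
    · obtain ⟨x, hx⟩ := hf.exists_eq_some k
      exact ⟨⟨x, hmem hx⟩, hx⟩
    · refine (hf.connected k).map ⟨fun x => ⟨⟨x.1, hmem x.2⟩, x.2⟩, fun h => h⟩ ?_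
      rintro ⟨⟨x, hxs⟩, hx⟩
      exact ⟨⟨x, hx⟩, rfl⟩
    · obtain ⟨x₁, x₂, h₁, h₂, hadj⟩ := hf.exists_adj k₁ k₂ hk
      exact ⟨⟨x₁, hmem h₁⟩, ⟨x₂, hmem h₂⟩, h₁, h₂, hadj⟩

/-- `v` is merged into `u`: the contraction of the edge `uv` when `G.Adj v u`, and the deletion of
`v` when `v` is isolated. -/
def mergeVertex (G : SimpleGraph V) (v u : V) : SimpleGraph {x // x ≠ v} :=
  SimpleGraph.fromRel fun p q => G.Adj p q ∨ ((p : V) = u ∧ G.Adj v q)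

section mergeVertex

variable {G : SimpleGraph V} {v u w : V}

lemma mergeVertex_adj_of_adj {p q : {x // x ≠ v}} (h : G.Adj p q) : (mergeVertex G v u).Adj p q :=
  (fromRel_adj _ _ _).mpr ⟨fun hpq => h.ne (congrArg Subtype.val hpq), Or.inl (Or.inl h)⟩

lemma mergeVertex_adj_of_adj_of_adj (hv : G.neighborSet v ⊆ {u, w}) {p q : {x // x ≠ v}}
    (hpq : p ≠ q) (hp : G.Adj v p) (hq : G.Adj v q) : (mergeVertex G v u).Adj p q := by
  refine (fromRel_adj _ _ _).mpr ⟨hpq, ?_⟩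
  rcases hv hp with hpu | hpw
  · exact Or.inl (Or.inr ⟨hpu, hq⟩)
  rcases hv hq with hqu | hqw
  · exact Or.inr (Or.inr ⟨hqu, hp⟩)
  · exact absurd (Subtype.ext (hpw.trans hqw.symm)) hpq

lemma isMinor_mergeVertex (hu : ∀ y, G.Adj v y → G.Adj v u) : IsMinor (mergeVertex G v u) G := by
  classical
  set f : V → Option {x // x ≠ v} := fun x =>
    if hx : x = v then (if hvu : G.Adj v u then some ⟨u, hvu.ne'⟩ else none) else some ⟨x, hx⟩
  have hf (x : V) (p : {x // x ≠ v}) :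
      f x = some p ↔ x = p ∨ (x = v ∧ G.Adj v u ∧ (p : V) = u) := by
    by_cases hx : x = v
    · subst hx
      by_cases hvu : G.Adj x u <;> simp [f, hvu, Subtype.ext_iff, eq_comm, p.2.symm]
    · simp [f, hx, Subtype.ext_iff]
  have hfp (p : {x // x ≠ v}) : f p = some p := (hf p p).mpr (Or.inl rfl)
  have hfv {p : {x // x ≠ v}} (hp : (p : V) = u) (hvu : G.Adj v u) : f v = some p :=
    (hf v p).mpr (Or.inr ⟨rfl, hvu, hp⟩)
  refine ⟨f, fun p => ⟨p, hfp p⟩, fun p => ?_, fun p q hpq => ?_⟩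
  · rw [connected_iff_exists_forall_reachable]
    refine ⟨⟨p, hfp p⟩, fun ⟨x, hx⟩ => ?_⟩
    rcases (hf x p).mp hx with rfl | ⟨hxv, hvu, hpu⟩
    · rfl
    · exact Adj.reachable (show G.Adj p x by rw [hpu, hxv]; exact hvu.symm)
  · obtain ⟨-, (h | ⟨hp, hvq⟩) | (h | ⟨hq, hvp⟩)⟩ := (fromRel_adj _ _ _).mp hpq
    · exact ⟨p, q, hfp p, hfp q, h⟩
    · exact ⟨v, q, hfv hp (hu _ hvq), hfp q, hvq⟩
    · exact ⟨p, q, hfp p, hfp q, h.symm⟩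
    · exact ⟨p, v, hfp p, hfv hq (hu _ hvp), hvp.symm⟩

end mergeVertex

namespace IsMinorModel

variable {K : SimpleGraph κ} {G : SimpleGraph V} {f : V → Option κ} {v u w : V}

lemma exists_ne_of_three_le_vdeg (hf : IsMinorModel K G f) (hv : G.neighborSet v ⊆ {u, w})
    {k : κ} (hk : 3 ≤ vdeg K k) : ∃ x, f x = some k ∧ x ≠ v := by
  by_contra! hkv
  have : Nonempty V := ⟨v⟩
  have hq (k' : κ) (hk' : k' ∈ K.neighborSet k) : ∃ q, f q = some k' ∧ q ∈ G.neighborSet v := by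
    obtain ⟨p, q, hp, hq, hpq⟩ := hf.exists_adj k k' hk'
    exact ⟨q, hq, hkv p hp ▸ hpq⟩
  choose! q hqk hqv using hq
  have hinj : Set.InjOn q (K.neighborSet k) := fun k₁ h₁ k₂ h₂ e =>
    Option.some_injective _ ((hqk k₁ h₁).symm.trans (e ▸ hqk k₂ h₂))
  have hle := Set.ncard_le_ncard_of_injOn q (fun k' hk' => hv (hqv k' hk')) hinj
  have hpair := Set.ncard_insert_le u {w}
  rw [Set.ncard_singleton] at hpair
  unfold vdeg at hk
  omega

lemma exists_adj_of_eq_some (hf : IsMinorModel K G f) {k : κ} {x : V} (hx : f x = some k)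
    (hxv : x ≠ v) (hvk : f v = some k) : ∃ z, f z = some k ∧ G.Adj v z := by
  have : Nontrivial {y | f y = some k} :=
    ⟨⟨v, hvk⟩, ⟨x, hx⟩, fun h => hxv (congrArg Subtype.val h).symm⟩
  obtain ⟨z, hz⟩ := (hf.connected k).preconnected.exists_adj_of_nontrivial ⟨v, hvk⟩
  exact ⟨z, z.2, hz⟩

lemma exists_substitute (hf : IsMinorModel K G f) (hv : G.neighborSet v ⊆ {u, w})
    {k : κ} (hk : 3 ≤ vdeg K k) : ∃ z, f z = some k ∧ z ≠ v ∧ (f v = some k → G.Adj v z) := by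
  obtain ⟨x, hx, hxv⟩ := hf.exists_ne_of_three_le_vdeg hv hk
  by_cases hvk : f v = some k
  · obtain ⟨z, hz, hvz⟩ := hf.exists_adj_of_eq_some hx hxv hvk
    exact ⟨z, hz, hvz.ne', fun _ => hvz⟩
  · exact ⟨x, hx, hxv, fun h => absurd h hvk⟩

lemma connected_mergeVertex (hf : IsMinorModel K G f) (hv : G.neighborSet v ⊆ {u, w})
    {k : κ} (hk : 3 ≤ vdeg K k) :
    ((mergeVertex G v u).induce {p : {x // x ≠ v} | f p = some k}).Connected := by
  classical
  obtain ⟨z, hz, hzv, hvz⟩ := hf.exists_substitute hv hk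
  let φ (x : {x | f x = some k}) : {p : {x // x ≠ v} | f p = some k} :=
    if hx : x.1 = v then ⟨⟨z, hzv⟩, hz⟩ else ⟨⟨x.1, hx⟩, x.2⟩
  have hφ (x : {x | f x = some k}) (hx : x.1 ≠ v) : φ x = ⟨⟨x.1, hx⟩, x.2⟩ := dif_neg hx
  have hstep (x y : {x | f x = some k}) (hxy : G.Adj x y) (hy : y.1 ≠ v) :
      ((mergeVertex G v u).induce {p : {x // x ≠ v} | f p = some k}).Reachable (φ x) (φ y) := by
    rw [hφ y hy]
    by_cases hx : x.1 = v
    · rw [show φ x = ⟨⟨z, hzv⟩, hz⟩ from dif_pos hx]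
      by_cases hzy : z = y.1
      · rw [show (⟨⟨z, hzv⟩, hz⟩ : {p : {x // x ≠ v} | f p = some k}) = ⟨⟨y.1, hy⟩, y.2⟩ from
          Subtype.ext (Subtype.ext hzy)]
      · exact Adj.reachable (mergeVertex_adj_of_adj_of_adj hv
          (fun h => hzy (congrArg Subtype.val h)) (hvz (hx ▸ x.2)) (hx ▸ hxy))
    · rw [hφ x hx]
      exact Adj.reachable (mergeVertex_adj_of_adj hxy)
  refine (hf.connected k).of_surjective_of_reachable φ
    (fun p => ⟨⟨p.1.1, p.2⟩, hφ _ p.1.2⟩) fun x y hxy => ?_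
  by_cases hy : y.1 = v
  · exact (hstep y x hxy.symm fun hx => hxy.ne (Subtype.ext (hx.trans hy.symm))).symm
  · exact hstep x y hxy hy

lemma exists_adj_mergeVertex (hf : IsMinorModel K G f) (hv : G.neighborSet v ⊆ {u, w})
    (hK : ∀ k, 3 ≤ vdeg K k) {k₁ k₂ : κ} (hk : K.Adj k₁ k₂) :
    ∃ p₁ p₂ : {x // x ≠ v}, f p₁ = some k₁ ∧ f p₂ = some k₂ ∧ (mergeVertex G v u).Adj p₁ p₂ := by
  have hreroute (k₁ k₂ : κ) (hk : k₁ ≠ k₂) (x₁ x₂ : V) (h₁ : f x₁ = some k₁) (h₂ : f x₂ = some k₂)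
      (hadj : G.Adj x₁ x₂) (hx₂ : x₂ ≠ v) :
      ∃ p₁ p₂ : {x // x ≠ v}, f p₁ = some k₁ ∧ f p₂ = some k₂ ∧ (mergeVertex G v u).Adj p₁ p₂ := by
    by_cases hx₁ : x₁ = v
    · obtain ⟨z, hz, hzv, hvz⟩ := hf.exists_substitute hv (hK k₁)
      have hzx₂ : z ≠ x₂ := fun h => hk (Option.some_injective _ (hz.symm.trans (h ▸ h₂)))
      exact ⟨⟨z, hzv⟩, ⟨x₂, hx₂⟩, hz, h₂, mergeVertex_adj_of_adj_of_adj hv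
        (fun h => hzx₂ (congrArg Subtype.val h)) (hvz (hx₁ ▸ h₁)) (hx₁ ▸ hadj)⟩
    · exact ⟨⟨x₁, hx₁⟩, ⟨x₂, hx₂⟩, h₁, h₂, mergeVertex_adj_of_adj hadj⟩
  obtain ⟨x₁, x₂, h₁, h₂, hadj⟩ := hf.exists_adj k₁ k₂ hk
  by_cases hx₂ : x₂ = v
  · obtain ⟨p₂, p₁, hp₂, hp₁, hp⟩ := hreroute k₂ k₁ hk.ne' x₂ x₁ h₂ h₁ hadj.symm
      fun hx₁ => hadj.ne (hx₁.trans hx₂.symm)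
    exact ⟨p₁, p₂, hp₁, hp₂, hp.symm⟩
  · exact hreroute k₁ k₂ hk.ne x₁ x₂ h₁ h₂ hadj hx₂

lemma toMergeVertex (hf : IsMinorModel K G f) (hv : G.neighborSet v ⊆ {u, w})
    (hK : ∀ k, 3 ≤ vdeg K k) : IsMinorModel K (mergeVertex G v u) fun p => f p where
  exists_eq_some k := by
    obtain ⟨x, hx, hxv⟩ := hf.exists_ne_of_three_le_vdeg hv (hK k)
    exact ⟨⟨x, hxv⟩, hx⟩
  connected k := hf.connected_mergeVertex hv (hK k)
  exists_adj _ _ hk := hf.exists_adj_mergeVertex hv hK hk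

end IsMinorModel

lemma three_le_vdeg_completeGraph_fin_five (k : Fin 5) : 3 ≤ vdeg (completeGraph (Fin 5)) k := by
  rw [vdeg, Set.ncard_eq_toFinset_card']
  revert k
  decide

lemma three_le_vdeg_completeBipartiteGraph_fin_three (k : Fin 3 ⊕ Fin 3) :
    3 ≤ vdeg (completeBipartiteGraph (Fin 3) (Fin 3)) k := by
  rcases k with i | i
  · refine (Set.ncard_le_ncard (s := Set.range Sum.inr) ?_).trans' ?_
    · rintro _ ⟨j, rfl⟩
      simp [completeBipartiteGraph]
    · simp [Set.ncard_range_of_injective Sum.inr_injective]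
  · refine (Set.ncard_le_ncard (s := Set.range Sum.inl) ?_).trans' ?_
    · rintro _ ⟨j, rfl⟩
      simp [completeBipartiteGraph]
    · simp [Set.ncard_range_of_injective Sum.inl_injective]

section

variable {G : SimpleGraph V} {v u w : V}

lemma isMinor_induce_ne_mergeVertex {K : SimpleGraph κ} (hK : ∀ k, 3 ≤ vdeg K k)
    (hv : G.neighborSet v ⊆ {u, w}) {a : {x // x ≠ v}}
    (h : IsMinor K (G.induce {x | x ≠ (a : V)})) :
    IsMinor K ((mergeVertex G v u).induce {p | p ≠ a}) := by
  obtain ⟨f, hf, hfa⟩ := (isMinor_induce_iff _).mp h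
  refine (isMinor_induce_iff _).mpr ⟨_, hf.toMergeVertex hv hK, fun p hp => hfa p ?_⟩
  simpa using congrArg Subtype.val (not_not.mp hp)

lemma IsApex.of_mergeVertex (hv : G.neighborSet v ⊆ {u, w}) (h : IsApex (mergeVertex G v u)) :
    IsApex G := by
  obtain ⟨a, hK₅, hK₃₃⟩ := h
  exact ⟨a, fun h => hK₅ (isMinor_induce_ne_mergeVertex three_le_vdeg_completeGraph_fin_five hv h),
    fun h => hK₃₃ (isMinor_induce_ne_mergeVertex three_le_vdeg_completeBipartiteGraph_fin_three hv h)⟩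

end

/-- Every minor minimal non-apex graph has minimum vertex degree at least 3. -/
theorem stmt_2 {V : Type} [Fintype V] (G : SimpleGraph V) (h : IsMMNA G) :
    ∀ v : V, 3 ≤ vdeg G v := by
  classical
  intro v
  by_contra! hv
  obtain ⟨u, w, huw, hu⟩ := exists_neighborSet_subset_pair (Set.toFinite _) (Nat.le_of_lt_succ hv)
  have hproper : ¬ IsMinor G (mergeVertex G v u) := fun h' =>
    h'.card_le.not_gt (Fintype.card_subtype_lt (x := v) (by simp))
  exact h.1 ((h.2 _ _ (isMinor_mergeVertex hu) hproper).of_mergeVertex huw)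
end

section
/- If G is a non-apex simple graph and v is a vertex of G of degree 0 or 1, then the graph G − v obtained by deleting v is also non-apex. -/
open SimpleGraph

lemma IsMinor.of_iso {V V' W : Type} {H : SimpleGraph W} {G : SimpleGraph V}
    {G' : SimpleGraph V'} (e : G ≃g G') (h : IsMinor H G) : IsMinor H G' := by
  obtain ⟨f, h1, h2, h3⟩ := h
  refine ⟨fun v' => f (e.symm v'), fun w => ?_, fun w => ?_, fun w₁ w₂ hadj => ?_⟩
  · obtain ⟨u, hu⟩ := h1 w
    exact ⟨e u, by simp [hu]⟩
  · rw [connected_iff]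
    constructor
    · intro x y
      have hx : (e.symm x.val) ∈ {x | f x = some w} := x.prop
      have hy : (e.symm y.val) ∈ {x | f x = some w} := y.prop
      have hrr := ((h2 w).preconnected ⟨_, hx⟩ ⟨_, hy⟩).map
        ((⟨fun z => ⟨e z.val, by rw [Set.mem_setOf_eq, e.symm_apply_apply]; exact z.prop⟩,
          fun {a b} hab => e.map_rel_iff.mpr hab⟩ :
          G.induce {x | f x = some w} →g G'.induce {v' | f (e.symm v') = some w}))
      convert hrr using 2
      · exact Subtype.ext (e.apply_symm_apply x.val).symm
      · exact Subtype.ext (e.apply_symm_apply y.val).symm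
    · obtain ⟨u, hu⟩ := h1 w
      exact ⟨⟨e u, by simp [hu]⟩⟩
  · obtain ⟨v₁, v₂, hv₁, hv₂, hadj'⟩ := h3 w₁ w₂ hadj
    exact ⟨e v₁, e v₂, by simp [hv₁], by simp [hv₂], e.map_rel_iff.mpr hadj'⟩

lemma reach_avoid {V : Type} (G : SimpleGraph V) (v : V)
    (hv : ∀ a b, G.Adj v a → G.Adj v b → a = b) (S : Set V) :
    ∀ (n : ℕ) (x y : S) (p : (G.induce S).Walk x y), p.length ≤ n →
      ∀ (hx : x.val ≠ v) (hy : y.val ≠ v),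
      ((G.induce {u : V | u ≠ v}).induce {u : {u : V // u ≠ v} | u.val ∈ S}).Reachable
        ⟨⟨x.val, hx⟩, x.prop⟩ ⟨⟨y.val, hy⟩, y.prop⟩ := by
  intro n
  induction n with
  | zero =>
    intro x y p hp hx hy
    cases p with
    | nil => exact Reachable.refl _
    | cons h q => simp [Walk.length_cons] at hp
  | succ n ih =>
    intro x y p hp hx hy
    cases p with
    | nil => exact Reachable.refl _
    | @cons _ z _ h q =>
      by_cases hz : z.val = v
      · have hadj : G.Adj x.val z.val := h
        rw [hz] at hadj
        cases q with
        | nil => exact absurd hz hy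
        | @cons _ z₂ _ h2 q2 =>
          have hadj2 : G.Adj z.val z₂.val := h2
          rw [hz] at hadj2
          have hz2 : z₂ = x := Subtype.ext (hv _ _ hadj2 hadj.symm)
          refine ih x y (q2.copy hz2 rfl) ?_ hx hy
          rw [Walk.length_copy]
          simp only [Walk.length_cons] at hp
          omega
      · have step : ((G.induce {u : V | u ≠ v}).induce
            {u : {u : V // u ≠ v} | u.val ∈ S}).Adj
            ⟨⟨x.val, hx⟩, x.prop⟩ ⟨⟨z.val, hz⟩, z.prop⟩ := h
        refine step.reachable.trans (ih z y q ?_ hz hy)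
        simp only [Walk.length_cons] at hp
        omega

lemma minor_avoid_leaf {V W : Type} (G : SimpleGraph V) (v : V)
    (hv : ∀ a b, G.Adj v a → G.Adj v b → a = b)
    (H : SimpleGraph W) (hH : ∀ w, ∃ w₁ w₂, w₁ ≠ w₂ ∧ H.Adj w w₁ ∧ H.Adj w w₂)
    (hM : IsMinor H G) : IsMinor H (G.induce {u | u ≠ v}) := by
  obtain ⟨f, h1, h2, h3⟩ := hM
  have fact1 : ∀ w, ∃ u, u ≠ v ∧ f u = some w := by
    intro w
    by_contra hcon
    push_neg at hcon
    obtain ⟨w₁, w₂, hne, ha1, ha2⟩ := hH w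
    obtain ⟨v₁, a₁, hv₁, ha₁, hadj₁⟩ := h3 w w₁ ha1
    obtain ⟨v₂, a₂, hv₂, ha₂, hadj₂⟩ := h3 w w₂ ha2
    have e₁ : v₁ = v := by by_contra hh; exact hcon v₁ hh hv₁
    have e₂ : v₂ = v := by by_contra hh; exact hcon v₂ hh hv₂
    subst e₁; subst e₂
    have : a₁ = a₂ := hv _ _ hadj₁ hadj₂
    rw [this, ha₂] at ha₁
    exact hne (Option.some_injective _ ha₁.symm)
  have fact2 : ∀ w, f v = some w → ∃ a, G.Adj v a ∧ f a = some w := by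
    intro w hfv
    obtain ⟨u, huv, hu⟩ := fact1 w
    obtain ⟨p⟩ := (h2 w).preconnected ⟨v, hfv⟩ ⟨u, hu⟩
    cases p with
    | nil => exact absurd rfl huv
    | @cons _ z _ h q => exact ⟨z.val, h, z.prop⟩
  refine ⟨fun u => f u.val, fun w => ?_, fun w => ?_, fun w₁ w₂ hadj => ?_⟩
  · obtain ⟨u, huv, hu⟩ := fact1 w
    exact ⟨⟨u, huv⟩, hu⟩
  · rw [connected_iff]
    constructor
    · intro x y
      obtain ⟨p⟩ := (h2 w).preconnected ⟨x.val.val, x.prop⟩ ⟨y.val.val, y.prop⟩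
      exact reach_avoid G v hv {x | f x = some w} p.length
        ⟨x.val.val, x.prop⟩ ⟨y.val.val, y.prop⟩ p le_rfl x.val.prop y.val.prop
    · obtain ⟨u, huv, hu⟩ := fact1 w
      exact ⟨⟨⟨u, huv⟩, hu⟩⟩
  · obtain ⟨v₁, v₂, hv₁, hv₂, hadj'⟩ := h3 w₁ w₂ hadj
    have hne : w₁ ≠ w₂ := hadj.ne
    have hv₁v : v₁ ≠ v := by
      rintro rfl
      obtain ⟨a, haadj, hfa⟩ := fact2 w₁ hv₁
      have : a = v₂ := hv _ _ haadj hadj'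
      rw [this, hv₂] at hfa
      exact hne (Option.some_injective _ hfa).symm
    have hv₂v : v₂ ≠ v := by
      rintro rfl
      obtain ⟨a, haadj, hfa⟩ := fact2 w₂ hv₂
      have : a = v₁ := hv _ _ haadj hadj'.symm
      rw [this, hv₁] at hfa
      exact hne (Option.some_injective _ hfa)
    exact ⟨⟨v₁, hv₁v⟩, ⟨v₂, hv₂v⟩, hv₁, hv₂, hadj'⟩

lemma K5_mindeg : ∀ w : Fin 5, ∃ w₁ w₂ : Fin 5, w₁ ≠ w₂ ∧
    (completeGraph (Fin 5)).Adj w w₁ ∧ (completeGraph (Fin 5)).Adj w w₂ := by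
  intro w; fin_cases w <;>
  first
  | exact ⟨0, 1, by decide, by simp only [completeGraph, top_adj]; decide,
      by simp only [completeGraph, top_adj]; decide⟩
  | exact ⟨1, 2, by decide, by simp only [completeGraph, top_adj]; decide,
      by simp only [completeGraph, top_adj]; decide⟩
  | exact ⟨0, 2, by decide, by simp only [completeGraph, top_adj]; decide,
      by simp only [completeGraph, top_adj]; decide⟩

lemma K33_mindeg : ∀ w : Fin 3 ⊕ Fin 3, ∃ w₁ w₂, w₁ ≠ w₂ ∧
    (completeBipartiteGraph (Fin 3) (Fin 3)).Adj w w₁ ∧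
    (completeBipartiteGraph (Fin 3) (Fin 3)).Adj w w₂ := by
  rintro (i | i)
  · exact ⟨Sum.inr 0, Sum.inr 1, by decide, by simp, by simp⟩
  · exact ⟨Sum.inl 0, Sum.inl 1, by decide, by simp, by simp⟩


/-- Deleting a vertex of degree 0 or 1 from a non-apex graph leaves a
non-apex graph. -/
theorem stmt_3 {V : Type} [Fintype V] (G : SimpleGraph V) (hG : ¬ IsApex G)
    (v : V) (hv : vdeg G v = 0 ∨ vdeg G v = 1) :
    ¬ IsApex (G.induce {u | u ≠ v}) := by
  intro hap
  apply hG
  obtain ⟨u₀, hpl⟩ := hap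
  have huniq : ∀ a b, G.Adj v a → G.Adj v b → a = b := by
    intro a b ha hb
    rcases hv with h0 | h1
    · exfalso
      have hemp : (G.neighborSet v) = ∅ := (Set.ncard_eq_zero (Set.toFinite _)).mp h0
      exact Set.eq_empty_iff_forall_notMem.mp hemp a ha
    · obtain ⟨c, hc⟩ := Set.ncard_eq_one.mp h1
      have ha' : a ∈ G.neighborSet v := ha
      have hb' : b ∈ G.neighborSet v := hb
      rw [hc, Set.mem_singleton_iff] at ha' hb'
      rw [ha', hb']
  have hvne : v ≠ u₀.val := fun h => u₀.prop h.symm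
  have huniq₁ : ∀ a b : {x : V // x ≠ u₀.val},
      (G.induce {u | u ≠ u₀.val}).Adj ⟨v, hvne⟩ a →
      (G.induce {u | u ≠ u₀.val}).Adj ⟨v, hvne⟩ b → a = b := by
    intro a b ha hb
    exact Subtype.ext (huniq _ _ ha hb)
  have e : ((G.induce {u | u ≠ u₀.val}).induce
        {u | u ≠ (⟨v, hvne⟩ : {x : V // x ≠ u₀.val})}) ≃g
      ((G.induce {u | u ≠ v}).induce {u | u ≠ u₀}) := by
    refine ⟨⟨fun x => ⟨⟨x.val.val, fun h => x.prop (Subtype.ext h)⟩,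
        fun h => x.val.prop (congrArg Subtype.val h)⟩,
      fun x => ⟨⟨x.val.val, fun h => x.prop (Subtype.ext h)⟩,
        fun h => x.val.prop (congrArg Subtype.val h)⟩, ?_, ?_⟩, ?_⟩
    · intro x; rfl
    · intro x; rfl
    · intro a b; exact Iff.rfl
  refine ⟨u₀.val, ?_, ?_⟩
  · intro hm
    exact hpl.1 (IsMinor.of_iso e
      (minor_avoid_leaf _ (⟨v, hvne⟩ : {x : V // x ≠ u₀.val}) huniq₁ _ K5_mindeg hm))
  · intro hm
    exact hpl.2 (IsMinor.of_iso e
      (minor_avoid_leaf _ (⟨v, hvne⟩ : {x : V // x ≠ u₀.val}) huniq₁ _ K33_mindeg hm))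
end

section
/- If G is a non-apex simple graph and v is a vertex of G of degree 2, then the graph obtained from G by contracting one of the two edges incident to v (deleting any resulting loops and parallel edges) is also non-apex. -/
open SimpleGraph

/-- Contraction of the edge `uv` onto the vertex `u`: the vertex `v` is removed and `u`
becomes adjacent to all former neighbors of `v` (loops and multiple edges are discarded). -/
def contractEdge {V : Type} (G : SimpleGraph V) (u v : V) : SimpleGraph {x : V // x ≠ v} :=
  SimpleGraph.fromRel (fun a b =>
    G.Adj a.1 b.1 ∨ (a.1 = u ∧ G.Adj v b.1) ∨ (b.1 = u ∧ G.Adj a.1 v))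

/-!
If `contractEdge G u v - a` were planar while `G - a` has a `K₅` or `K₃,₃` minor, transport the
minor model. Let `t` be the other neighbour of `v`. Both `K₅` and `K₃,₃` have minimum degree
three, so the degree-two vertex `v` is not a branch set by itself; merge `v` into a neighbour `z`
lying in its branch set (any neighbour if `v` is in none). Since contracting `uv` makes `u` and `t`
adjacent, every edge at `v` becomes an edge at `z` or collapses inside a branch set.
-/

/-- `IsMinor H G` unfolds to `∃ f, IsMinorModel H G f`. -/
def IsMinorModel_s4 {V W : Type} (H : SimpleGraph W) (G : SimpleGraph V) (f : V → Option W) :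
    Prop :=
  (∀ w : W, ∃ v, f v = some w) ∧
    (∀ w : W, (G.induce {v | f v = some w}).Connected) ∧
    (∀ w₁ w₂ : W, H.Adj w₁ w₂ → ∃ v₁ v₂, f v₁ = some w₁ ∧ f v₂ = some w₂ ∧ G.Adj v₁ v₂)

namespace SimpleGraph

variable {α β : Type*} {A : SimpleGraph α} {B : SimpleGraph β}

lemma Preconnected.of_surjective_of_adj_or_eq (hA : A.Preconnected) {φ : α → β}
    (hφ : Function.Surjective φ)
    (hadj : ∀ x y, A.Adj x y → B.Adj (φ x) (φ y) ∨ φ x = φ y) :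
    B.Preconnected := by
  intro b₁ b₂
  obtain ⟨x, rfl⟩ := hφ b₁
  obtain ⟨y, rfl⟩ := hφ b₂
  rw [reachable_iff_reflTransGen]
  refine (reachable_iff_reflTransGen _ _ |>.mp (hA x y)).lift' φ fun a b hab =>
    show Relation.ReflTransGen B.Adj (φ a) (φ b) from (hadj a b hab).elim .single (· ▸ .refl)

lemma Connected.of_surjective_of_adj_or_eq (hA : A.Connected) {φ : α → β}
    (hφ : Function.Surjective φ)
    (hadj : ∀ x y, A.Adj x y → B.Adj (φ x) (φ y) ∨ φ x = φ y) :
    B.Connected :=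
  have := hA.nonempty.map φ
  ⟨hA.preconnected.of_surjective_of_adj_or_eq hφ hadj⟩

end SimpleGraph

namespace IsMinorModel_s4

variable {α β W : Type} {K : SimpleGraph W} {A : SimpleGraph α} {B : SimpleGraph β}
  {f : α → Option W}

lemma map (hf : IsMinorModel_s4 K A f) (φ : α → β) (g : β → Option W)
    (hg : ∀ x w, f x = some w → g (φ x) = some w)
    (hφ : ∀ y w, g y = some w → ∃ x, f x = some w ∧ φ x = y)
    (hadj : ∀ x y, A.Adj x y → B.Adj (φ x) (φ y) ∨ φ x = φ y) :
    IsMinorModel_s4 K B g := by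
  obtain ⟨hsurj, hconn, hedge⟩ := hf
  refine ⟨fun w => ?_, fun w => ?_, fun w₁ w₂ hw => ?_⟩
  · obtain ⟨x, hx⟩ := hsurj w
    exact ⟨φ x, hg x w hx⟩
  · refine (hconn w).of_surjective_of_adj_or_eq (φ := fun x => ⟨φ x, hg x w x.2⟩) ?_
      fun x y hxy => (hadj x y hxy).imp id fun h => Subtype.ext h
    rintro ⟨y, hy⟩
    obtain ⟨x, hx, rfl⟩ := hφ y w hy
    exact ⟨⟨x, hx⟩, rfl⟩
  · obtain ⟨x, y, hx, hy, hxy⟩ := hedge w₁ w₂ hw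
    have hx' := hg x w₁ hx
    have hy' := hg y w₂ hy
    refine ⟨φ x, φ y, hx', hy', (hadj x y hxy).resolve_right fun h => hw.ne ?_⟩
    rw [h, hy'] at hx'
    exact (Option.some.inj hx').symm

/-- Otherwise `{x}` is a whole branch set, and the edges leaving it towards the three neighbours
of `w` would give `x` three distinct neighbours. -/
lemma exists_adj_of_encard_le_two (hf : IsMinorModel_s4 K A f) {w : W}
    (hK : 2 < (K.neighborSet w).encard) {x : α} (hx : (A.neighborSet x).encard ≤ 2)
    (hxw : f x = some w) : ∃ z, A.Adj x z ∧ f z = some w := by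
  by_contra! hz
  have hsingle : ∀ y, f y = some w → y = x := by
    intro y hy
    by_contra hne
    have : Nontrivial {y | f y = some w} :=
      ⟨⟨⟨x, hxw⟩, ⟨y, hy⟩, fun h => hne (congrArg Subtype.val h).symm⟩⟩
    obtain ⟨z, hxz⟩ := (hf.2.1 w).preconnected.exists_adj_of_nontrivial ⟨x, hxw⟩
    exact hz z.1 hxz z.2
  have hsub : some '' K.neighborSet w ⊆ f '' A.neighborSet x := by
    rintro _ ⟨w', hw', rfl⟩
    obtain ⟨x', y, hx', hy, hxy⟩ := hf.2.2 w w' hw'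
    obtain rfl := hsingle x' hx'
    exact ⟨y, hxy, hy⟩
  have hcard := (Set.encard_le_encard hsub).trans (Set.encard_image_le f _)
  rw [Option.some_injective _ |>.encard_image] at hcard
  exact (hcard.trans hx).not_gt hK

lemma exists_adj_forall_eq_some (hf : IsMinorModel_s4 K A f)
    (hK : ∀ w, 2 < (K.neighborSet w).encard) {x y : α} (hx : (A.neighborSet x).encard ≤ 2)
    (hxy : A.Adj x y) : ∃ z, A.Adj x z ∧ ∀ w, f x = some w → f z = some w := by
  rcases hfx : f x with _ | w
  · exact ⟨y, hxy, by simp⟩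
  · obtain ⟨z, hxz, hzw⟩ := hf.exists_adj_of_encard_le_two (hK w) hx hfx
    exact ⟨z, hxz, by simpa using hzw⟩

end IsMinorModel_s4

lemma exists_neighborSet_eq_pair {V : Type} {G : SimpleGraph V} {u v : V}
    (hv : vdeg G v = 2) (huv : G.Adj u v) : ∃ t, u ≠ t ∧ G.neighborSet v = {u, t} := by
  obtain ⟨x, y, hxy, hN⟩ := Set.ncard_eq_two.mp hv
  have hu : u ∈ G.neighborSet v := huv.symm
  rw [hN] at hu
  rcases hu with rfl | rfl
  · exact ⟨y, hxy, hN⟩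
  · exact ⟨x, hxy.symm, hN.trans (Set.pair_comm _ _)⟩

lemma contractEdge_adj_of_adj {V : Type} {G : SimpleGraph V} {u v : V} {x y : {x : V // x ≠ v}}
    (h : G.Adj x.1 y.1) : (contractEdge G u v).Adj x y := by
  simp only [contractEdge, fromRel_adj]
  exact ⟨fun e => h.ne (congrArg Subtype.val e), .inl (.inl h)⟩

lemma contractEdge_adj_of_neighborSet_eq_pair {V : Type} {G : SimpleGraph V} {u v t : V}
    (hN : G.neighborSet v = {u, t}) {x y : {x : V // x ≠ v}} (hxy : x.1 ≠ y.1)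
    (hx : G.Adj v x.1) (hy : G.Adj v y.1) : (contractEdge G u v).Adj x y := by
  have hx' : x.1 ∈ G.neighborSet v := hx
  have hy' : y.1 ∈ G.neighborSet v := hy
  rw [hN] at hx' hy'
  simp only [contractEdge, fromRel_adj]
  refine ⟨fun e => hxy (congrArg Subtype.val e), .inl ?_⟩
  rcases hx' with hxu | hxt
  · exact .inr (.inl ⟨hxu, hy⟩)
  · rcases hy' with hyu | hyt
    · exact .inr (.inr ⟨hyu, hx.symm⟩)
    · exact absurd (hxt.trans hyt.symm) hxy

/-- `Function.update id v z` merges `v` into its neighbour `z`. -/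
lemma contractEdge_adj_or_eq_of_adj {V : Type} [DecidableEq V] {G : SimpleGraph V} {u v t z : V}
    (hN : G.neighborSet v = {u, t}) (hz : G.Adj v z) {x y : V} (hxy : G.Adj x y)
    {x' y' : {x : V // x ≠ v}} (hx' : x'.1 = Function.update id v z x)
    (hy' : y'.1 = Function.update id v z y) : (contractEdge G u v).Adj x' y' ∨ x' = y' := by
  have hmerge {x' y' : {x : V // x ≠ v}} {y : V} (hvy : G.Adj v y) (hx' : x'.1 = z)
      (hy' : y'.1 = y) : (contractEdge G u v).Adj x' y' ∨ x' = y' := by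
    by_cases h : x'.1 = y'.1
    · exact .inr (Subtype.ext h)
    · exact .inl (contractEdge_adj_of_neighborSet_eq_pair hN h (hx' ▸ hz) (hy' ▸ hvy))
  by_cases hxv : x = v <;> by_cases hyv : y = v
  · exact absurd (hxv.trans hyv.symm) hxy.ne
  · subst hxv
    rw [Function.update_self] at hx'
    rw [Function.update_of_ne hyv, id_eq] at hy'
    exact hmerge hxy hx' hy'
  · subst hyv
    rw [Function.update_of_ne hxv, id_eq] at hx'
    rw [Function.update_self] at hy'
    exact (hmerge hxy.symm hy' hx').imp Adj.symm Eq.symm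
  · rw [Function.update_of_ne hxv, id_eq] at hx'
    rw [Function.update_of_ne hyv, id_eq] at hy'
    exact .inl (contractEdge_adj_of_adj (hx' ▸ hy' ▸ hxy))

lemma IsMinor.induce_contractEdge {V W : Type} {K : SimpleGraph W}
    (hK : ∀ w, 2 < (K.neighborSet w).encard) {G : SimpleGraph V} {u v t : V} (hut : u ≠ t)
    (hN : G.neighborSet v = {u, t}) (a : {x : V // x ≠ v})
    (h : IsMinor K (G.induce {x | x ≠ a.1})) :
    IsMinor K ((contractEdge G u v).induce {y | y ≠ a}) := by
  let A := G.induce {x | x ≠ a.1}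
  obtain ⟨f, hf⟩ : ∃ f, IsMinorModel_s4 K A f := h
  let v' : {x : V | x ≠ a.1} := ⟨v, Ne.symm a.2⟩
  have hdeg : (A.neighborSet v').encard ≤ 2 :=
    (Set.encard_preimage_val_le_encard_right _ _).trans (hN ▸ Set.encard_pair hut).le
  obtain ⟨y, hvy⟩ : ∃ y, A.Adj v' y := by
    have hvu : u ∈ G.neighborSet v := hN ▸ Set.mem_insert u {t}
    have hvt : t ∈ G.neighborSet v := hN ▸ Set.mem_insert_of_mem u rfl
    by_cases hua : u = a.1
    · exact ⟨⟨t, fun e => hut (hua.trans e.symm)⟩, hvt⟩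
    · exact ⟨⟨u, hua⟩, hvu⟩
  obtain ⟨z, hvz, hz⟩ := hf.exists_adj_forall_eq_some hK hdeg hvy
  have hzv : z.1 ≠ v := fun e => hvz.ne' (Subtype.ext e)
  classical
  let r := Function.update id v z.1
  have hr_self : r v = z.1 := Function.update_self ..
  have hr_of_ne {x : V} (hx : x ≠ v) : r x = x := Function.update_of_ne hx ..
  have hrv (x : V) : r x ≠ v := by
    simp only [r, Function.update_apply]
    split_ifs with hx
    exacts [hzv, hx]
  have hra (x : {x : V | x ≠ a.1}) : r x ≠ a.1 := by
    simp only [r, Function.update_apply]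
    split_ifs
    exacts [z.2, x.2]
  let φ (x : {x : V | x ≠ a.1}) : {y : {x : V // x ≠ v} | y ≠ a} :=
    ⟨⟨r x, hrv x⟩, fun e => hra x (congrArg Subtype.val e)⟩
  refine ⟨_, hf.map φ (fun y => f ⟨y.1.1, fun e => y.2 (Subtype.ext e)⟩) ?_ ?_ ?_⟩
  · intro x w hxw
    by_cases hx : x.1 = v
    · obtain rfl : x = v' := Subtype.ext hx
      have hφz : (⟨r v, hra v'⟩ : {x : V | x ≠ a.1}) = z := Subtype.ext hr_self
      exact (congrArg f hφz).trans (hz w hxw)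
    · have hφx : (⟨r x, hra x⟩ : {x : V | x ≠ a.1}) = x := Subtype.ext (hr_of_ne hx)
      exact (congrArg f hφx).trans hxw
  · intro y w hyw
    exact ⟨_, hyw, Subtype.ext (Subtype.ext (hr_of_ne y.1.2))⟩
  · intro x y hxy
    exact (contractEdge_adj_or_eq_of_adj hN hvz hxy rfl rfl).imp id Subtype.ext

instance {V W : Type*} : DecidableRel (completeBipartiteGraph V W).Adj := fun a b =>
  inferInstanceAs (Decidable ((a.isLeft ∧ b.isRight) ∨ (a.isRight ∧ b.isLeft)))

lemma SimpleGraph.two_lt_encard_neighborSet {W : Type} [Fintype W] {K : SimpleGraph W}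
    [DecidableRel K.Adj] {w : W} (h : 3 ≤ K.degree w) : 2 < (K.neighborSet w).encard := by
  rw [← coe_neighborFinset, Set.encard_coe_eq_coe_finsetCard, card_neighborFinset_eq_degree]
  exact_mod_cast h

theorem stmt_4_general {V : Type} (G : SimpleGraph V) (hG : ¬ IsApex G)
    (v : V) (hv : vdeg G v = 2) (u : V) (huv : G.Adj u v) :
    ¬ IsApex (contractEdge G u v) := by
  obtain ⟨t, hut, hN⟩ := exists_neighborSet_eq_pair hv huv
  have hK₅ : ∀ w, 3 ≤ (completeGraph (Fin 5)).degree w := by decide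
  have hK₃₃ : ∀ w, 3 ≤ (completeBipartiteGraph (Fin 3) (Fin 3)).degree w := by decide
  rintro ⟨a, hK₅_free, hK₃₃_free⟩
  refine hG ⟨a.1, fun h => hK₅_free ?_, fun h => hK₃₃_free ?_⟩
  · exact h.induce_contractEdge (fun w => two_lt_encard_neighborSet (hK₅ w)) hut hN a
  · exact h.induce_contractEdge (fun w => two_lt_encard_neighborSet (hK₃₃ w)) hut hN a

/-- If `G` is non-apex and `v` has degree 2, then contracting one of the two
edges incident to `v` yields a non-apex graph. -/
theorem stmt_4 {V : Type} [Fintype V] (G : SimpleGraph V) (hG : ¬ IsApex G)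
    (v : V) (hv : vdeg G v = 2) (u : V) (huv : G.Adj u v) :
    ¬ IsApex (contractEdge G u v) :=
  stmt_4_general G hG v hv u huv
end

section
/- Let G be a connected simple graph on 13 vertices with minimum degree at least 6. If G has a cut vertex, i.e., a vertex v such that G − v is disconnected, then G contains K7 (the complete graph on seven vertices) as a subgraph; in particular, G contains K6 as a minor. -/
open SimpleGraph

/-!
Each vertex of `G - v` has at least `δ - 1` neighbours in `G - v`, so every component of
`G - v` has at least `δ` vertices. Two components fit into the `n - 1 ≤ 2δ` vertices of `G - v`
only if one of them, `C`, has exactly `δ` vertices. A vertex `x ∈ C` then has all its `≥ δ`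
neighbours among the `δ` vertices of `(C \ {x}) ∪ {v}`, so `C ∪ {v}` is a clique of size `δ + 1`.
For `n = 13` and `δ = 6` this is a `K₇`, and a subgraph is in particular a minor.
-/

namespace SimpleGraph

variable {V : Type} {G : SimpleGraph V} {v x : V} {C : Set V}

theorem Embedding.isMinor {W : Type} {H : SimpleGraph W} (e : H ↪g G) : IsMinor H G := by
  have hbranch : ∀ w, {u | Function.partialInv e u = some w} = {e w} := fun w => by
    ext u
    exact (e.injective.isPartialInv w u).trans eq_comm
  refine ⟨Function.partialInv e, fun w => ⟨e w, Function.partialInv_left e.injective w⟩,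
    fun w => ?_, fun w₁ w₂ h => ⟨e w₁, e w₂, Function.partialInv_left e.injective w₁,
      Function.partialInv_left e.injective w₂, e.map_adj_iff.2 h⟩⟩
  rw [hbranch]
  exact Connected.of_subsingleton

theorem neighborSet_subset_insert_sdiff (hC : ∀ x ∈ C, ∀ y, G.Adj x y → y ≠ v → y ∈ C)
    (hx : x ∈ C) : G.neighborSet x ⊆ insert v (C \ {x}) := by
  intro y hxy
  by_cases hy : y = v
  · exact Or.inl hy
  · exact Or.inr ⟨hC x hx y hxy hy, fun hyx => G.ne_of_adj hxy hyx.symm⟩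

theorem vdeg_le_ncard [Finite V] (hC : ∀ x ∈ C, ∀ y, G.Adj x y → y ≠ v → y ∈ C)
    (hx : x ∈ C) : vdeg G x ≤ C.ncard :=
  calc vdeg G x ≤ (insert v (C \ {x})).ncard :=
        Set.ncard_le_ncard (neighborSet_subset_insert_sdiff hC hx)
    _ ≤ (C \ {x}).ncard + 1 := Set.ncard_insert_le _ _
    _ = C.ncard := Set.ncard_sdiff_singleton_add_one hx

theorem isClique_insert_of_ncard_le_vdeg [Finite V]
    (hC : ∀ x ∈ C, ∀ y, G.Adj x y → y ≠ v → y ∈ C) (hdeg : ∀ x ∈ C, C.ncard ≤ vdeg G x) :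
    G.IsClique (insert v C) := by
  have hadj : ∀ x ∈ C, ∀ y ∈ insert v (C \ {x}), G.Adj x y := fun x hx y hy => by
    have hle : (insert v (C \ {x})).ncard ≤ vdeg G x :=
      calc (insert v (C \ {x})).ncard ≤ (C \ {x}).ncard + 1 := Set.ncard_insert_le _ _
        _ = C.ncard := Set.ncard_sdiff_singleton_add_one hx
        _ ≤ vdeg G x := hdeg x hx
    rwa [← Set.eq_of_subset_of_ncard_le (neighborSet_subset_insert_sdiff hC hx) hle] at hy
  refine isClique_insert.2 ⟨fun x hx y hy hxy => hadj x hx y (Or.inr ⟨hy, fun h => hxy h.symm⟩),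
    fun y hy _ => (hadj y hy v (Or.inl rfl)).symm⟩

theorem ConnectedComponent.mem_image_supp_of_adj {c : (G.induce {u | u ≠ v}).ConnectedComponent}
    {y : V} (hx : x ∈ Subtype.val '' c.supp) (hxy : G.Adj x y) (hy : y ≠ v) :
    y ∈ Subtype.val '' c.supp := by
  obtain ⟨x, hx, rfl⟩ := hx
  exact ⟨⟨y, hy⟩, (c.mem_supp_congr_adj (v := x) (w := ⟨y, hy⟩) hxy).1 hx, rfl⟩

theorem not_cliqueFree_of_not_preconnected_induce [Fintype V] {δ : ℕ}
    (hcard : Fintype.card V ≤ 2 * δ + 1) (hdeg : ∀ x, δ ≤ vdeg G x)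
    (hcut : ¬ (G.induce {u | u ≠ v}).Preconnected) : ¬ G.CliqueFree (δ + 1) := by
  obtain ⟨a, b, hab⟩ : ∃ a b, ¬ (G.induce {u | u ≠ v}).Reachable a b := by
    simpa [Preconnected] using hcut
  set A := Subtype.val '' ((G.induce {u | u ≠ v}).connectedComponentMk a).supp
  set B := Subtype.val '' ((G.induce {u | u ≠ v}).connectedComponentMk b).supp
  have hA : ∀ x ∈ A, ∀ y, G.Adj x y → y ≠ v → y ∈ A := fun _ hx _ =>
    ConnectedComponent.mem_image_supp_of_adj hx
  have hB : ∀ x ∈ B, ∀ y, G.Adj x y → y ≠ v → y ∈ B := fun _ hx _ =>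
    ConnectedComponent.mem_image_supp_of_adj hx
  have hvAB : v ∉ A ∪ B := by
    rintro (⟨x, _, hx⟩ | ⟨x, _, hx⟩) <;> exact x.2 hx
  have hAB : Disjoint A B := (Set.disjoint_image_iff Subtype.val_injective).2 <|
    pairwise_disjoint_supp_connectedComponent _ (fun h => hab (ConnectedComponent.eq.1 h))
  have hδA : δ ≤ A.ncard := (hdeg a).trans (vdeg_le_ncard hA ⟨a, rfl, rfl⟩)
  have hδB : δ ≤ B.ncard := (hdeg b).trans (vdeg_le_ncard hB ⟨b, rfl, rfl⟩)
  have hsum : A.ncard + B.ncard + 1 ≤ Fintype.card V := by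
    rw [← Set.ncard_union_eq hAB, ← Set.ncard_insert_of_notMem hvAB, ← Nat.card_eq_fintype_card]
    exact Set.ncard_le_card _
  have hclique : G.IsClique (insert v A) :=
    isClique_insert_of_ncard_le_vdeg hA fun x _ => by have := hdeg x; omega
  classical
  refine fun hfree => hfree (insert v A).toFinset ⟨by simpa using hclique, ?_⟩
  rw [← Set.ncard_eq_toFinset_card', Set.ncard_insert_of_notMem fun h => hvAB (Or.inl h)]
  omega

end SimpleGraph

theorem stmt_13_general (G : SimpleGraph (Fin 13))
    (hdeg : ∀ v, 6 ≤ vdeg G v)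
    (v : Fin 13) (hcut : ¬ (G.induce {u | u ≠ v}).Connected) :
    Nonempty (completeGraph (Fin 7) ↪g G) ∧ IsMinor (completeGraph (Fin 6)) G := by
  have hpre : ¬ (G.induce {u | u ≠ v}).Preconnected := fun h =>
    hcut { preconnected := h, nonempty := ⟨⟨v + 1, by simp⟩⟩ }
  have hK7 : ¬ G.CliqueFree 7 :=
    not_cliqueFree_of_not_preconnected_induce (δ := 6) (by simp) hdeg hpre
  let e := topEmbeddingOfNotCliqueFree hK7
  exact ⟨⟨e⟩, (e.comp (Embedding.completeGraph Fin.castSuccEmb)).isMinor⟩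

/-- A connected graph on 13 vertices with minimum degree at least 6 that has
a cut vertex contains `K₇` as a subgraph, and in particular `K₆` as a minor. -/
theorem stmt_13 (G : SimpleGraph (Fin 13)) (hconn : G.Connected)
    (hdeg : ∀ v, 6 ≤ vdeg G v)
    (v : Fin 13) (hcut : ¬ (G.induce {u | u ≠ v}).Connected) :
    Nonempty (completeGraph (Fin 7) ↪g G) ∧ IsMinor (completeGraph (Fin 6)) G :=
  stmt_13_general G hdeg v hcut
end

section
/- Let G be a simple graph on 13 vertices in which exactly four vertices have degree 7, the remaining nine vertices have degree 6, and no two vertices of degree 7 are adjacent. Then there are exactly 28 edges joining a degree-6 vertex to a degree-7 vertex, and there exists a vertex of degree 6 that is adjacent to all four vertices of degree 7. -/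
open SimpleGraph

/-- In a graph on 13 vertices with exactly four vertices of degree 7, nine
of degree 6, and no two degree-7 vertices adjacent, there are exactly 28 edges joining a
degree-6 vertex to a degree-7 vertex, and some degree-6 vertex is adjacent to all four
degree-7 vertices. -/
theorem stmt_14 (G : SimpleGraph (Fin 13))
    (hdegs : ∀ v, vdeg G v = 6 ∨ vdeg G v = 7)
    (h7 : ({v | vdeg G v = 7} : Set (Fin 13)).ncard = 4)
    (hnadj : ∀ u v, vdeg G u = 7 → vdeg G v = 7 → ¬ G.Adj u v) :
    ({e ∈ G.edgeSet | ∃ u v, e = s(u, v) ∧ vdeg G u = 6 ∧ vdeg G v = 7}).ncard = 28 ∧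
      ∃ w, vdeg G w = 6 ∧ ∀ v, vdeg G v = 7 → G.Adj w v := by
  classical
  have hvd : ∀ v, vdeg G v = G.degree v := by
    intro v
    rw [vdeg, Set.ncard_eq_toFinset_card']
    congr 1
  set B : Finset (Fin 13) := Finset.univ.filter (fun v => G.degree v = 7) with hBdef
  have hmemB : ∀ v, v ∈ B ↔ G.degree v = 7 := by intro v; simp [hBdef]
  have hB4 : B.card = 4 := by
    have hset : ({v | vdeg G v = 7} : Set (Fin 13)) = ↑B := by
      ext v; simp [hvd, hBdef]
    rw [hset, Set.ncard_coe_finset] at h7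
    exact h7
  have hdeg6 : ∀ v, v ∉ B → G.degree v = 6 := by
    intro v hv
    rcases hdegs v with h | h
    · rw [hvd] at h; exact h
    · exact absurd ((hmemB v).2 (by rw [← hvd]; exact h)) hv
  have hnadj' : ∀ u v, u ∈ B → v ∈ B → ¬ G.Adj u v := by
    intro u v hu hv
    exact hnadj u v (by rw [hvd]; exact (hmemB u).1 hu)
      (by rw [hvd]; exact (hmemB v).1 hv)
  -- Part 1
  have hdisj : ∀ x ∈ B, ∀ y ∈ B, x ≠ y →
      Disjoint (G.incidenceFinset x) (G.incidenceFinset y) := by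
    intro a ha b hb hab
    rw [Finset.disjoint_left]
    intro e hea heb
    rw [SimpleGraph.mem_incidenceFinset] at hea heb
    exact hnadj' a b ha hb (G.adj_of_mem_incidenceSet hab hea heb)
  have hSeq : {e ∈ G.edgeSet | ∃ u v, e = s(u, v) ∧ vdeg G u = 6 ∧ vdeg G v = 7}
      = ↑(B.biUnion (fun v => G.incidenceFinset v)) := by
    ext e
    simp only [Finset.coe_biUnion, Set.mem_iUnion, Finset.mem_coe,
      SimpleGraph.mem_incidenceFinset, SimpleGraph.incidenceSet,
      Set.mem_setOf_eq, Set.mem_sep_iff]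
    constructor
    · rintro ⟨he, u, v, rfl, hu, hv⟩
      exact ⟨v, (hmemB v).2 (by rw [← hvd]; exact hv), he, by simp⟩
    · rintro ⟨v, hvB, he, hve⟩
      obtain ⟨u, rfl⟩ := Sym2.mem_iff_exists.mp hve
      have hadj : G.Adj v u := he
      refine ⟨he, u, v, Sym2.eq_swap.symm, ?_, ?_⟩
      · rw [hvd]
        exact hdeg6 u (fun huB => hnadj' v u hvB huB hadj)
      · rw [hvd]; exact (hmemB v).1 hvB
  have hcard1 : (B.biUnion (fun v => G.incidenceFinset v)).card = 28 := by
    rw [Finset.card_biUnion hdisj]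
    have hc : ∀ v ∈ B, (G.incidenceFinset v).card = 7 := by
      intro v hv
      rw [SimpleGraph.card_incidenceFinset_eq_degree]
      exact (hmemB v).1 hv
    rw [Finset.sum_congr rfl hc, Finset.sum_const, hB4]
    norm_num
  -- Part 2
  have key : ∑ u ∈ Bᶜ, (B.filter (fun v => G.Adj u v)).card = 28 := by
    have h1 : ∀ v ∈ B, (Bᶜ.filter (fun u => G.Adj v u)).card = 7 := by
      intro v hv
      have heq : Bᶜ.filter (fun u => G.Adj v u) = G.neighborFinset v := by
        ext u
        simp only [Finset.mem_filter, Finset.mem_compl, SimpleGraph.mem_neighborFinset]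
        exact ⟨fun h => h.2, fun h => ⟨fun huB => hnadj' v u hv huB h, h⟩⟩
      rw [heq]
      exact (hmemB v).1 hv
    calc ∑ u ∈ Bᶜ, (B.filter (fun v => G.Adj u v)).card
        = ∑ u ∈ Bᶜ, ∑ v ∈ B, if G.Adj u v then 1 else 0 := by
          exact Finset.sum_congr rfl fun u _ => Finset.card_filter _ _
      _ = ∑ v ∈ B, ∑ u ∈ Bᶜ, if G.Adj u v then 1 else 0 := Finset.sum_comm
      _ = ∑ v ∈ B, (Bᶜ.filter (fun u => G.Adj v u)).card := by
          refine Finset.sum_congr rfl fun v hv => ?_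
          rw [Finset.card_filter]
          exact Finset.sum_congr rfl fun u hu => by rw [G.adj_comm]
      _ = ∑ v ∈ B, 7 := Finset.sum_congr rfl h1
      _ = 28 := by rw [Finset.sum_const, hB4]; norm_num
  have hex : ∃ u ∈ Bᶜ, 4 ≤ (B.filter (fun v => G.Adj u v)).card := by
    by_contra h
    push_neg at h
    have hle : ∀ u ∈ Bᶜ, (B.filter (fun v => G.Adj u v)).card ≤ 3 := fun u hu =>
      Nat.lt_succ_iff.mp (h u hu)
    have h28 : (28 : ℕ) ≤ ∑ u ∈ Bᶜ, 3 := key ▸ Finset.sum_le_sum hle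
    rw [Finset.sum_const, Finset.card_compl, hB4] at h28
    simp [Fintype.card_fin] at h28
  obtain ⟨u, huA, hu4⟩ := hex
  have hsub : B.filter (fun v => G.Adj u v) = B := by
    apply Finset.eq_of_subset_of_card_le (Finset.filter_subset _ _)
    rw [hB4]; exact hu4
  refine ⟨by rw [hSeq, Set.ncard_coe_finset]; exact hcard1, u,
    by rw [hvd]; exact hdeg6 u (Finset.mem_compl.mp huA), fun v hv7 => ?_⟩
  have hvB : v ∈ B := (hmemB v).2 (by rw [← hvd]; exact hv7)
  rw [← hsub] at hvB
  exact (Finset.mem_filter.mp hvB).2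
end

section
/- Let H be the simple graph on 8 vertices obtained as follows: take the complete bipartite graph K3,3 on vertex set {a,b,c,d,e,f}, add one extra edge joining two vertices that lie in the same part of the bipartition, and then add two new mutually nonadjacent vertices v and w, each adjacent to all six vertices a,b,c,d,e,f. Then H contains K6 as a minor. -/
open SimpleGraph

/-- The graph of STATEMENT 15: `K₃,₃` on the six vertices `Fin 3 ⊕ Fin 3`, together with
one extra edge `xy` (inside one part), and two new mutually nonadjacent vertices each
joined to all six vertices of the `K₃,₃`. -/
def graph15 (x y : Fin 3 ⊕ Fin 3) : SimpleGraph ((Fin 3 ⊕ Fin 3) ⊕ Fin 2) :=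
  SimpleGraph.fromRel (fun p q =>
    (∃ i j, p = Sum.inl (Sum.inl i) ∧ q = Sum.inl (Sum.inr j)) ∨
    (p = Sum.inl x ∧ q = Sum.inl y) ∨
    (∃ a k, p = Sum.inl a ∧ q = Sum.inr k))


instance g15dec (x y : Fin 3 ⊕ Fin 3) : DecidableRel (graph15 x y).Adj := fun a b => by
  have d0 : Decidable (a ≠ b) := inferInstance
  have d1 : Decidable ((∃ i j, a = Sum.inl (Sum.inl i) ∧ b = Sum.inl (Sum.inr j)) ∨
          a = Sum.inl x ∧ b = Sum.inl y ∨ ∃ a' k, a = Sum.inl a' ∧ b = Sum.inr k) := inferInstance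
  have d2 : Decidable ((∃ i j, b = Sum.inl (Sum.inl i) ∧ a = Sum.inl (Sum.inr j)) ∨
          b = Sum.inl x ∧ a = Sum.inl y ∨ ∃ a' k, b = Sum.inl a' ∧ a = Sum.inr k) := inferInstance
  exact @decidable_of_iff _ _ (SimpleGraph.fromRel_adj _ a b).symm
    (@instDecidableAnd _ _ d0 (@instDecidableOr _ _ d1 d2))

/-- Index of a vertex within its part. -/
def bidx : Fin 3 ⊕ Fin 3 → Fin 3
  | .inl i => i
  | .inr i => i

/-- Branch-set assignment witnessing the `K₆` minor. -/
def bset (x y : Fin 3 ⊕ Fin 3) : (Fin 3 ⊕ Fin 3) ⊕ Fin 2 → Option (Fin 6) := fun p =>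
  match p with
  | .inr k => if k = 0 then some 0 else some 4
  | .inl a =>
    if a = x then some 1 else if a = y then some 2 else
    if a.isLeft = x.isLeft then some 5
    else some (if bidx a = 0 then 3 else if bidx a = 1 then 4 else 5)

instance cgdec : DecidableRel (completeGraph (Fin 6)).Adj := fun a b =>
  decidable_of_iff (a ≠ b) Iff.rfl

instance (priority := 2000) myConnDec {V : Type} [Fintype V] [DecidableEq V]
    (G : SimpleGraph V) [DecidableRel G.Adj] : Decidable G.Connected :=
  decidable_of_iff (G.Preconnected ∧ ∃ _v : V, True) <| Iff.intro
    (fun h => h.2.elim fun v _ => @SimpleGraph.Connected.mk _ _ h.1 ⟨v⟩)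
    (fun h => ⟨h.preconnected, h.nonempty.elim fun v => ⟨v, trivial⟩⟩)

/-- `K₃,₃` plus an edge inside one part, coned over by two mutually
nonadjacent vertices, contains a `K₆` minor. -/
theorem stmt_15 (x y : Fin 3 ⊕ Fin 3) (hxy : x ≠ y)
    (hsame : (∃ i j, x = Sum.inl i ∧ y = Sum.inl j) ∨
      (∃ i j, x = Sum.inr i ∧ y = Sum.inr j)) :
    IsMinor (completeGraph (Fin 6)) (graph15 x y) := by
  have key : ∀ x y : Fin 3 ⊕ Fin 3, x ≠ y → x.isLeft = y.isLeft →
      ((∀ w : Fin 6, ∃ v, bset x y v = some w) ∧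
       (∀ w : Fin 6, ((graph15 x y).induce {v | bset x y v = some w}).Connected) ∧
       (∀ w₁ w₂ : Fin 6, (completeGraph (Fin 6)).Adj w₁ w₂ →
         ∃ v₁ v₂, bset x y v₁ = some w₁ ∧ bset x y v₂ = some w₂ ∧ (graph15 x y).Adj v₁ v₂)) := by
    decide
  have hs : x.isLeft = y.isLeft := by
    rcases hsame with ⟨i, j, hi, hj⟩ | ⟨i, j, hi, hj⟩ <;> simp [hi, hj]
  exact ⟨bset x y, key x y hxy hs⟩
end

section
/- Every apex simple graph on 12 vertices with exactly 38 edges has a vertex v of degree 11 (adjacent to all other vertices) such that the graph G − v is a maximal planar graph on 11 vertices. -/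
open SimpleGraph

/-! Mader's bound: a graph on `n ≥ 3` vertices without a `K₅` minor has at most `3n - 6` edges.
By induction on `n`, pass to a subgraph with exactly `3n - 5` edges. Deleting a vertex of degree
at most 3, or contracting an edge that lies in at most two triangles, gives a minor on `n - 1`
vertices with at least `3(n - 1) - 5` edges. Otherwise, since the average degree is below 6, some
vertex `v` has degree 4 or 5 while every neighbour of `v` is adjacent to at least three other
neighbours of `v`; then `K₅` sits in the closed neighbourhood of `v`, possibly after contracting
one edge between two neighbours.

For the theorem, deleting an apex vertex `v` leaves a graph on 11 vertices with at most 27 edges,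
so `v` has degree at least `38 - 27 = 11`, and then equality holds throughout. -/

open Finset

namespace SimpleGraph

section Minor

variable {U V W : Type} {F : SimpleGraph U} {G : SimpleGraph V} {H : SimpleGraph W}

theorem isMinor_of_branchSets (B : W → Set V) (hdisj : Pairwise fun w₁ w₂ ↦ Disjoint (B w₁) (B w₂))
    (hconn : ∀ w, (G.induce (B w)).Connected)
    (hadj : ∀ w₁ w₂, H.Adj w₁ w₂ → ∃ a ∈ B w₁, ∃ b ∈ B w₂, G.Adj a b) : IsMinor H G := by
  classical
  let f : V → Option W := fun v ↦ if h : ∃ w, v ∈ B w then some h.choose else none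
  have hf : ∀ v w, f v = some w ↔ v ∈ B w := by
    intro v w
    by_cases h : ∃ w, v ∈ B w
    · simp only [f, dif_pos h, Option.some.injEq]
      exact ⟨fun e ↦ e ▸ h.choose_spec,
        fun hv ↦ hdisj.eq (Set.not_disjoint_iff.2 ⟨v, h.choose_spec, hv⟩)⟩
    · simp only [f, dif_neg h, reduceCtorEq, false_iff]
      exact fun hv ↦ h ⟨w, hv⟩
  have hB : ∀ w, {v | f v = some w} = B w := fun w ↦ Set.ext fun v ↦ hf v w
  refine ⟨f, fun w ↦ ?_, fun w ↦ hB w ▸ hconn w, fun w₁ w₂ h ↦ ?_⟩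
  · obtain ⟨⟨v, hv⟩⟩ := (hconn w).nonempty
    exact ⟨v, (hf v w).2 hv⟩
  · obtain ⟨a, ha, b, hb, hab⟩ := hadj w₁ w₂ h
    exact ⟨a, b, (hf a w₁).2 ha, (hf b w₂).2 hb, hab⟩

theorem induce_singleton_connected (v : V) : (G.induce {v}).Connected :=
  Connected.of_subsingleton

theorem IsContained.isMinor (h : H ⊑ G) : IsMinor H G := by
  obtain ⟨φ⟩ := h
  refine isMinor_of_branchSets (fun w ↦ {φ w}) (fun w₁ w₂ hw ↦ ?_) (fun w ↦ ?_)
    fun w₁ w₂ hw ↦ ⟨_, rfl, _, rfl, φ.toHom.map_adj hw⟩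
  · simpa using φ.injective.ne hw
  · exact induce_singleton_connected _

theorem induce_biUnion_connected {S : Set U} (B : U → Set V) (hS : (F.induce S).Connected)
    (hB : ∀ a ∈ S, (G.induce (B a)).Connected)
    (hadj : ∀ a b, F.Adj a b → ∃ x ∈ B a, ∃ y ∈ B b, G.Adj x y) :
    (G.induce (⋃ a ∈ S, B a)).Connected := by
  have hsub : ∀ a ∈ S, B a ⊆ ⋃ a ∈ S, B a := fun a ha ↦ Set.subset_biUnion_of_mem ha
  have reach : ∀ (a : S) {x y}, x ∈ B a → y ∈ B a → ∀ hx hy,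
      (G.induce (⋃ a ∈ S, B a)).Reachable ⟨x, hx⟩ ⟨y, hy⟩ := fun a x y hxa hya _ _ ↦
    ((hB a a.2).preconnected ⟨x, hxa⟩ ⟨y, hya⟩).map (induceHomOfLE G (hsub a a.2)).toHom
  have walk : ∀ (a b : S), (F.induce S).Walk a b → ∀ x ∈ B a, ∀ y ∈ B b, ∀ hx hy,
      (G.induce (⋃ a ∈ S, B a)).Reachable ⟨x, hx⟩ ⟨y, hy⟩ := by
    intro a b p
    induction p with
    | nil => exact fun x hx y hy ↦ reach _ hx hy
    | @cons a c b hac _ ih =>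
      intro x hx y hy hx' hy'
      obtain ⟨x', hx'a, y', hy'c, hxy'⟩ := hadj a c hac
      exact (reach a hx hx'a hx' (hsub a a.2 hx'a)).trans <|
        (Adj.reachable (v := ⟨y', hsub c c.2 hy'c⟩) (by exact hxy')).trans (ih y' hy'c y hy _ hy')
  obtain ⟨⟨a, ha⟩⟩ := hS.nonempty
  obtain ⟨⟨x, hx⟩⟩ := (hB a ha).nonempty
  refine (connected_iff_exists_forall_reachable _).2 ⟨⟨x, hsub a ha hx⟩, fun ⟨y, hy⟩ ↦ ?_⟩
  obtain ⟨b, hb, hyb⟩ := Set.mem_iUnion₂.1 hy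
  exact (hS.preconnected ⟨a, ha⟩ ⟨b, hb⟩).elim fun p ↦ walk _ _ p x hx y hyb _ _

theorem _root_.IsMinor.trans (hFG : IsMinor F G) (hGH : IsMinor G H) : IsMinor F H := by
  obtain ⟨f, hf_surj, hf_conn, hf_adj⟩ := hFG
  obtain ⟨g, hg_surj, hg_conn, hg_adj⟩ := hGH
  have hbranch : ∀ u,
      {w | (g w).bind f = some u} = ⋃ v ∈ {v | f v = some u}, {w | g w = some v} := by
    intro u; ext w; simp [Option.bind_eq_some_iff, and_comm]
  refine ⟨fun w ↦ (g w).bind f, fun u ↦ ?_, fun u ↦ ?_, fun u₁ u₂ hu ↦ ?_⟩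
  · obtain ⟨v, hv⟩ := hf_surj u
    obtain ⟨w, hw⟩ := hg_surj v
    exact ⟨w, by simp [hw, hv]⟩
  · rw [hbranch]
    refine induce_biUnion_connected _ (hf_conn u) (fun v _ ↦ hg_conn v) fun v₁ v₂ hv ↦ ?_
    obtain ⟨w₁, w₂, hw₁, hw₂, hw⟩ := hg_adj v₁ v₂ hv
    exact ⟨w₁, hw₁, w₂, hw₂, hw⟩
  · obtain ⟨v₁, v₂, hv₁, hv₂, hv⟩ := hf_adj u₁ u₂ hu
    obtain ⟨w₁, w₂, hw₁, hw₂, hw⟩ := hg_adj v₁ v₂ hv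
    exact ⟨w₁, w₂, by simp [hw₁, hv₁], by simp [hw₂, hv₂], hw⟩

end Minor

section ContractEdge

variable {V : Type} {G : SimpleGraph V} {x y : V}

/-- The contraction of the edge `xy`, on the vertex set `V ∖ {y}`: `y` is merged into `x`. -/
def contractEdge (G : SimpleGraph V) (x y : V) : SimpleGraph ({y}ᶜ : Set V) :=
  fromRel fun a b ↦ G.Adj a b ∨ (a.1 = x ∧ G.Adj y b)

section

variable [DecidableEq V]

def contractEdgeMap (hxy : x ≠ y) (v : V) : ({y}ᶜ : Set V) :=
  if h : v = y then ⟨x, hxy⟩ else ⟨v, h⟩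

@[simp]
theorem coe_contractEdgeMap (hxy : x ≠ y) (v : V) :
    (contractEdgeMap hxy v : V) = if v = y then x else v := by
  unfold contractEdgeMap; split_ifs <;> rfl

@[simp]
theorem contractEdgeMap_coe (hxy : x ≠ y) (a : ({y}ᶜ : Set V)) : contractEdgeMap hxy a = a :=
  dif_neg a.2

theorem contractEdgeMap_fiber (hxy : x ≠ y) (a : ({y}ᶜ : Set V)) :
    {v | contractEdgeMap hxy v = a} = if (a : V) = x then {x, y} else {(a : V)} := by
  ext v
  simp only [Set.mem_ofPred_eq, Subtype.ext_iff, coe_contractEdgeMap]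
  have := a.2
  split_ifs <;> grind [Set.mem_compl_singleton_iff]

end

theorem isMinor_contractEdge (hxy : G.Adj x y) : IsMinor (G.contractEdge x y) G := by
  classical
  refine ⟨fun v ↦ some (contractEdgeMap hxy.ne v), fun a ↦ ⟨a, ?_⟩, fun a ↦ ?_, fun a b hab ↦ ?_⟩
  · simp
  · rw [show {v | some (contractEdgeMap hxy.ne v) = some a} = {v | contractEdgeMap hxy.ne v = a} by
      simp, contractEdgeMap_fiber]
    by_cases ha : (a : V) = x
    · rw [if_pos ha]; exact induce_pair_connected_of_adj hxy
    · rw [if_neg ha]; exact induce_singleton_connected _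
  · obtain ⟨-, (hab | ⟨ha, hab⟩) | hab | ⟨hb, hab⟩⟩ := hab
    · exact ⟨a, b, by simp, by simp, hab⟩
    · exact ⟨y, b, by simp [Subtype.ext_iff, ha], by simp, hab⟩
    · exact ⟨a, b, by simp, by simp, hab.symm⟩
    · exact ⟨a, y, by simp, by simp [Subtype.ext_iff, hb], hab.symm⟩

theorem ncard_edgeSet_le_contractEdge [Finite V] (hxy : G.Adj x y) :
    G.edgeSet.ncard ≤ (G.contractEdge x y).edgeSet.ncard + (G.commonNeighbors x y).ncard + 1 := by
  classical
  set π := contractEdgeMap hxy.ne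
  -- Contracting `xy` loses `xy` and merges `yc` into `xc` for each common neighbour `c`;
  -- on all other edges `Sym2.map π` is injective.
  set B := insert s(x, y) ((fun c ↦ s(y, c)) '' G.commonNeighbors x y)
  have hB : B.ncard ≤ (G.commonNeighbors x y).ncard + 1 :=
    (Set.ncard_insert_le _ _).trans (by grw [Set.ncard_image_le (Set.toFinite _)])
  have hmaps : Set.MapsTo (Sym2.map π) (G.edgeSet \ B) (G.contractEdge x y).edgeSet := by
    intro e he
    induction e using Sym2.ind with
    | _ a b =>
      simp only [B, Set.mem_sdiff, mem_edgeSet, Set.mem_insert_iff, Set.mem_image, Sym2.eq_iff,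
        mem_commonNeighbors] at he
      simp only [Sym2.map_mk, mem_edgeSet, contractEdge, fromRel_adj, ne_eq, Subtype.ext_iff, π,
        coe_contractEdgeMap]
      split_ifs <;> grind [G.adj_comm, G.ne_of_adj]
  have hinj : Set.InjOn (Sym2.map π) (G.edgeSet \ B) := by
    intro e₁ he₁ e₂ he₂ h
    induction e₁ using Sym2.ind with
    | _ a b =>
    induction e₂ using Sym2.ind with
    | _ c d =>
      simp only [B, Set.mem_sdiff, mem_edgeSet, Set.mem_insert_iff, Set.mem_image, Sym2.eq_iff,
        mem_commonNeighbors] at he₁ he₂ ⊢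
      simp only [Sym2.map_mk, Sym2.eq_iff, Subtype.ext_iff, π, coe_contractEdgeMap] at h
      split_ifs at h <;> grind [G.adj_comm, G.ne_of_adj]
  calc G.edgeSet.ncard ≤ (G.edgeSet \ B).ncard + B.ncard := Set.ncard_le_ncard_sdiff_add_ncard _ _
    _ ≤ _ := by grw [Set.ncard_le_ncard_of_injOn _ hmaps hinj, hB]; omega

end ContractEdge

theorem ncard_edgeSet_eq_card_edgeFinset {V : Type} (G : SimpleGraph V) [Fintype G.edgeSet] :
    G.edgeSet.ncard = #G.edgeFinset := by
  rw [← coe_edgeFinset, Set.ncard_coe_finset]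

theorem exists_le_ncard_edgeSet_eq {V : Type} (G : SimpleGraph V) {m : ℕ}
    (hm : m ≤ G.edgeSet.ncard) : ∃ H ≤ G, H.edgeSet.ncard = m := by
  obtain ⟨s, hs, rfl⟩ := Set.exists_subset_card_eq hm
  have hdiag : s \ Sym2.diagSet = s := sdiff_eq_left.2 <|
    Set.subset_compl_iff_disjoint_right.1 (hs.trans G.edgeSet_subset_compl_diagSet)
  exact ⟨fromEdgeSet s, (fromEdgeSet_le G).2 (Set.sdiff_subset.trans hs),
    by rw [edgeSet_fromEdgeSet, hdiag]⟩

section EdgeCount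

variable {V : Type} [Fintype V] (G : SimpleGraph V) [DecidableRel G.Adj]

theorem ncard_edgeSet_le_choose_two : G.edgeSet.ncard ≤ (Fintype.card V).choose 2 := by
  classical
  rw [ncard_edgeSet_eq_card_edgeFinset]
  exact card_edgeFinset_le_card_choose_two

theorem ncard_edgeSet_eq_induce_compl_singleton_add_degree (v : V) :
    G.edgeSet.ncard = (G.induce {v}ᶜ).edgeSet.ncard + G.degree v := by
  classical
  have hle : G.degree v ≤ #G.edgeFinset := by
    rw [← card_incidenceFinset_eq_degree]
    exact card_le_card (G.incidenceFinset_subset v)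
  rw [ncard_edgeSet_eq_card_edgeFinset, ncard_edgeSet_eq_card_edgeFinset,
    card_edgeFinset_induce_compl_singleton, card_edgeFinset_deleteIncidenceSet]
  omega

theorem exists_degree_mul_card_le_two_mul_ncard_edgeSet [Nonempty V] :
    ∃ v, G.degree v * Fintype.card V ≤ 2 * G.edgeSet.ncard := by
  classical
  obtain ⟨v, hv⟩ := G.exists_minimal_degree_vertex
  refine ⟨v, ?_⟩
  rw [ncard_edgeSet_eq_card_edgeFinset, ← sum_degrees_eq_twice_card_edges, ← hv, mul_comm,
    ← Finset.card_univ, ← smul_eq_mul]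
  exact Finset.card_nsmul_le_sum _ _ _ fun w _ ↦ G.minDegree_le_degree w

end EdgeCount

section CompleteGraphFive

variable {V : Type} {G : SimpleGraph V}

theorem isMinor_completeGraph_five_of_adj {v a b c d e : V}
    (hva : G.Adj v a) (hvb : G.Adj v b) (hvc : G.Adj v c) (hve : G.Adj v e)
    (hac : G.Adj a c) (had : G.Adj a d) (hae : G.Adj a e) (hbc : G.Adj b c) (hbd : G.Adj b d)
    (hbe : G.Adj b e) (hce : G.Adj c e) (hvd : v ≠ d) (hab : a ≠ b) (hcd : c ≠ d) (hde : d ≠ e) :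
    IsMinor (completeGraph (Fin 5)) G := by
  refine isMinor_of_branchSets ![{v}, {a}, {c}, {e}, {b, d}] ?_ (fun i ↦ ?_) fun i j hij ↦ ?_
  · have := hva.ne; have := hvb.ne; have := hvc.ne; have := hve.ne; have := hac.ne
    have := had.ne; have := hae.ne; have := hbc.ne; have := hbe.ne; have := hce.ne
    intro i j hij
    fin_cases i <;> fin_cases j <;> simp_all [eq_comm]
  · fin_cases i
    all_goals first
      | exact induce_pair_connected_of_adj hbd
      | exact induce_singleton_connected _
  · fin_cases i <;> fin_cases j <;> simp at hij ⊢ <;> grind [G.adj_comm]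

variable [Fintype V] [DecidableEq V] [DecidableRel G.Adj]

theorem card_neighborFinset_sdiff_add_ncard_commonNeighbors {v u : V} (hu : G.Adj v u) :
    #(G.neighborFinset v \ insert u (G.neighborFinset u)) + (G.commonNeighbors v u).ncard + 1 =
      G.degree v := by
  have hsub : insert u (G.neighborFinset v ∩ G.neighborFinset u) ⊆ G.neighborFinset v :=
    insert_subset ((mem_neighborFinset ..).2 hu) inter_subset_left
  have hcommon : (G.commonNeighbors v u).ncard = #(G.neighborFinset v ∩ G.neighborFinset u) := by
    rw [← Set.ncard_coe_finset, coe_inter, coe_neighborFinset, coe_neighborFinset,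
      commonNeighbors_eq]
  rw [hcommon, ← card_neighborFinset_eq_degree, ← card_sdiff_add_card_eq_card hsub,
    card_insert_of_notMem (by simp), ← add_assoc]
  congr 3
  ext w
  simp only [mem_sdiff, mem_insert, mem_inter]
  tauto

theorem exists_pair_adj_of_card_nonadj_le_one {s : Finset V} (hs : 1 < #s)
    (h : ∀ u ∈ s, #(s \ insert u (G.neighborFinset u)) ≤ 1) :
    ∃ a ∈ s, ∃ b ∈ s, a ≠ b ∧ ∀ w ∈ s, w ≠ a → w ≠ b → G.Adj a w ∧ G.Adj b w := by
  by_cases hna : ∃ a ∈ s, ∃ b ∈ s, a ≠ b ∧ ¬ G.Adj a b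
  · obtain ⟨a, ha, b, hb, hab, hnab⟩ := hna
    have adj_of_nonadj : ∀ a ∈ s, ∀ b ∈ s, a ≠ b → ¬ G.Adj a b →
        ∀ w ∈ s, w ≠ a → w ≠ b → G.Adj a w := by
      intro a ha b hb hab hnab w hw hwa hwb
      by_contra hnaw
      exact hwb (card_le_one.1 (h a ha) w (by simp [*]) b (by simp [*, hab.symm]))
    exact ⟨a, ha, b, hb, hab, fun w hw hwa hwb ↦ ⟨adj_of_nonadj a ha b hb hab hnab w hw hwa hwb,
      adj_of_nonadj b hb a ha hab.symm (fun h ↦ hnab h.symm) w hw hwb hwa⟩⟩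
  · push Not at hna
    obtain ⟨a, ha, b, hb, hab⟩ := one_lt_card.1 hs
    exact ⟨a, ha, b, hb, hab, fun w hw hwa hwb ↦ ⟨hna a ha w hw hwa.symm, hna b hb w hw hwb.symm⟩⟩

theorem isMinor_completeGraph_five_of_degree_eq_four {v : V} (hv : G.degree v = 4)
    (hnonadj : ∀ u ∈ G.neighborFinset v, G.neighborFinset v \ insert u (G.neighborFinset u) = ∅) :
    IsMinor (completeGraph (Fin 5)) G := by
  have hclique : G.IsNClique 5 (insert v (G.neighborFinset v)) := by
    refine IsNClique.insert ⟨fun a ha b hb hab ↦ ?_, by simp [hv]⟩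
      fun b hb ↦ (mem_neighborFinset ..).1 hb
    by_contra hnab
    have hb' : b ∈ G.neighborFinset v \ insert a (G.neighborFinset a) := by
      simp [mem_coe.1 hb, Ne.symm hab, hnab]
    simp [hnonadj a ha] at hb'
  exact ((not_cliqueFree_iff_top_isContained 5).1 fun h ↦ h _ hclique).isMinor

theorem isMinor_completeGraph_five_of_degree_eq_five {v : V} (hv : G.degree v = 5)
    (hnonadj : ∀ u ∈ G.neighborFinset v,
      #(G.neighborFinset v \ insert u (G.neighborFinset u)) ≤ 1) :
    IsMinor (completeGraph (Fin 5)) G := by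
  set N := G.neighborFinset v
  have hN : ∀ {u}, u ∈ N → G.Adj v u := (mem_neighborFinset ..).1
  obtain ⟨a, ha, b, hb, hab, habN⟩ :=
    exists_pair_adj_of_card_nonadj_le_one (by simp [N, hv]) hnonadj
  set T := N \ {a, b}
  have hTN : T ⊆ N := sdiff_subset
  have hT : #T = 3 := by
    rw [card_sdiff_of_subset (by simp [insert_subset_iff, ha, hb]), card_pair hab]
    simp [N, hv]
  have habT : ∀ w ∈ T, G.Adj a w ∧ G.Adj b w := fun w hw ↦ by
    simp only [T, mem_sdiff, mem_insert, mem_singleton, not_or] at hw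
    exact habN w hw.1 hw.2.1 hw.2.2
  obtain ⟨c, hc, d, hd, hcd, hcdT⟩ := exists_pair_adj_of_card_nonadj_le_one (by omega)
    fun u hu ↦ (card_le_card (sdiff_subset_sdiff hTN le_rfl)).trans (hnonadj u (hTN hu))
  obtain ⟨e, he⟩ : ∃ e, T \ {c, d} = {e} := card_eq_one.1 <| by
    rw [card_sdiff_of_subset (by simp [insert_subset_iff, hc, hd]), card_pair hcd, hT]
  obtain ⟨heT, hec, hed⟩ : e ∈ T ∧ e ≠ c ∧ e ≠ d := by
    simpa [not_or] using (he ▸ mem_singleton_self e : e ∈ T \ {c, d})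
  exact isMinor_completeGraph_five_of_adj (hN ha) (hN hb) (hN (hTN hc)) (hN (hTN heT))
    (habT c hc).1 (habT d hd).1 (habT e heT).1 (habT c hc).2 (habT d hd).2 (habT e heT).2
    (hcdT e heT hec hed).1 (hN (hTN hd)).ne hab hcd (Ne.symm hed)

theorem isMinor_completeGraph_five_of_degree_le_five {v : V} (hv₄ : 4 ≤ G.degree v)
    (hv₅ : G.degree v ≤ 5) (hcommon : ∀ u, G.Adj v u → 3 ≤ (G.commonNeighbors v u).ncard) :
    IsMinor (completeGraph (Fin 5)) G := by
  have hnonadj : ∀ u ∈ G.neighborFinset v,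
      #(G.neighborFinset v \ insert u (G.neighborFinset u)) + 4 ≤ G.degree v := fun u hu ↦ by
    have := card_neighborFinset_sdiff_add_ncard_commonNeighbors ((mem_neighborFinset ..).1 hu)
    have := hcommon u ((mem_neighborFinset ..).1 hu)
    omega
  obtain hv₄ | hv₅ : G.degree v = 4 ∨ G.degree v = 5 := by omega
  · exact isMinor_completeGraph_five_of_degree_eq_four hv₄ fun u hu ↦
      card_eq_zero.1 (by have := hnonadj u hu; omega)
  · exact isMinor_completeGraph_five_of_degree_eq_five hv₅ fun u hu ↦ by
      have := hnonadj u hu; omega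

end CompleteGraphFive

theorem ncard_edgeSet_add_six_le_of_not_isMinor {V : Type} [Fintype V] (G : SimpleGraph V)
    (hV : 3 ≤ Fintype.card V) (hG : ¬ IsMinor (completeGraph (Fin 5)) G) :
    G.edgeSet.ncard + 6 ≤ 3 * Fintype.card V := by
  induction hn : Fintype.card V using Nat.strong_induction_on generalizing V with
  | _ n ih =>
  classical
  subst hn
  by_cases hn : Fintype.card V ≤ 4
  · have := G.ncard_edgeSet_le_choose_two
    rw [Nat.choose_two_right] at this
    interval_cases Fintype.card V <;> omega
  by_contra! hE
  obtain ⟨H, hHG, hHE⟩ := G.exists_le_ncard_edgeSet_eq (m := 3 * Fintype.card V - 5) (by omega)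
  have hH : ¬ IsMinor (completeGraph (Fin 5)) H :=
    fun h ↦ hG (h.trans (IsContained.of_le hHG).isMinor)
  have hsmaller : ∀ (U : Type) [Fintype U] (H' : SimpleGraph U),
      Fintype.card U = Fintype.card V - 1 → IsMinor H' H →
        H'.edgeSet.ncard + 6 ≤ 3 * (Fintype.card V - 1) :=
    fun U _ H' hU hH' ↦ ih _ (by omega) H' (by omega) (fun h ↦ hH (h.trans hH')) hU
  have hcard : ∀ v : V, Fintype.card ({v}ᶜ : Set V) = Fintype.card V - 1 := fun v ↦ by
    rw [Fintype.card_compl_set, Fintype.card_unique (α := ({v} : Set V))]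
  by_cases hdeg : ∃ v, H.degree v ≤ 3
  · obtain ⟨v, hv⟩ := hdeg
    have := hsmaller _ (H.induce {v}ᶜ) (hcard v) (IsContained.isMinor ⟨Copy.induce H _⟩)
    have := H.ncard_edgeSet_eq_induce_compl_singleton_add_degree v
    omega
  by_cases hcommon : ∃ x y, H.Adj x y ∧ (H.commonNeighbors x y).ncard ≤ 2
  · obtain ⟨x, y, hxy, hxy₂⟩ := hcommon
    have := hsmaller _ (H.contractEdge x y) (hcard y) (isMinor_contractEdge hxy)
    have := ncard_edgeSet_le_contractEdge hxy
    omega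
  push Not at hdeg hcommon
  have : Nonempty V := Fintype.card_pos_iff.1 (by omega)
  obtain ⟨v, hv⟩ := H.exists_degree_mul_card_le_two_mul_ncard_edgeSet
  have hv₅ : H.degree v < 6 := Nat.lt_of_mul_lt_mul_right (a := Fintype.card V) (by omega)
  exact hH (isMinor_completeGraph_five_of_degree_le_five (hdeg v) (by omega)
    fun u hu ↦ hcommon v u hu)

end SimpleGraph

/-- Every apex graph on 12 vertices with exactly 38 edges has a vertex `v`
adjacent to all other vertices (degree 11) such that deleting `v` leaves a maximal planar
graph on 11 vertices, i.e. a planar graph with exactly `3·11 - 6 = 27` edges. -/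
theorem stmt_17 (G : SimpleGraph (Fin 12)) (hapex : IsApex G)
    (hE : G.edgeSet.ncard = 38) :
    ∃ v, (∀ u, u ≠ v → G.Adj v u) ∧
      IsPlanar (G.induce {u | u ≠ v}) ∧
      (G.induce {u | u ≠ v}).edgeSet.ncard = 3 * 11 - 6 := by
  classical
  obtain ⟨v, hplanar⟩ := hapex
  have hsplit : G.edgeSet.ncard = (G.induce {u | u ≠ v}).edgeSet.ncard + G.degree v :=
    G.ncard_edgeSet_eq_induce_compl_singleton_add_degree v
  have hplanar_bound : (G.induce {u | u ≠ v}).edgeSet.ncard + 6 ≤ 3 * 11 := by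
    simpa [filter_ne'] using
      ncard_edgeSet_add_six_le_of_not_isMinor _ (by simp [filter_ne']) hplanar.1
  have hdeg : G.degree v < 12 := by simpa using G.degree_lt_card_verts v
  have huniv : G.IsUniversal v := (G.degree_eq_card_sub_one v).1 (by rw [Fintype.card_fin]; omega)
  exact ⟨v, fun u hu ↦ huniv hu.symm, hplanar, by omega⟩
end
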